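/- For jointly Gaussian real random variables X ~ N(0, v_a) and Y ~ N(0, v_b) with Cov(X,Y) = ρ√(v_a v_b), ρ ∈ [−1,1], and φ the ReLU, one has E[φ(X)φ(Y)] = (√(v_a v_b)/2)·f(ρ), where f(ρ) = (1/π)(ρ arcsin ρ + √(1−ρ²)) + ρ/2. -/

import Mathlib

open MeasureTheory ProbabilityTheory
open Real Set
open scoped ENNReal NNReal


lemma gauss_prod_eq :
    (gaussianReal 0 1).prod (gaussianReal 0 1) =
      (volume.prod volume).withDensity
        (fun p : ℝ × ℝ => ENNReal.ofReal (gaussianPDFReal 0 1 p.1 * gaussianPDFReal 0 1 p.2)) := by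
  refine Measure.prod_eq fun s t hs ht => ?_
  rw [withDensity_apply _ (hs.prod ht), ← Measure.prod_restrict]
  have hmeas : Measurable fun x : ℝ => ENNReal.ofReal (gaussianPDFReal 0 1 x) :=
    (measurable_gaussianPDFReal 0 1).ennreal_ofReal
  have h1 : ∫⁻ p : ℝ × ℝ, ENNReal.ofReal (gaussianPDFReal 0 1 p.1 * gaussianPDFReal 0 1 p.2)
        ∂(volume.restrict s).prod (volume.restrict t)
      = ∫⁻ p : ℝ × ℝ, ENNReal.ofReal (gaussianPDFReal 0 1 p.1) *
          ENNReal.ofReal (gaussianPDFReal 0 1 p.2)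
        ∂(volume.restrict s).prod (volume.restrict t) := by
    congr 1; funext p
    rw [ENNReal.ofReal_mul (gaussianPDFReal_nonneg 0 1 p.1)]
  rw [h1, lintegral_prod_mul hmeas.aemeasurable hmeas.aemeasurable,
    gaussianReal_of_var_ne_zero 0 one_ne_zero, withDensity_apply _ hs, withDensity_apply _ ht]
  rfl

lemma gauss_prod_integral (h : ℝ × ℝ → ℝ) :
    ∫ p, h p ∂((gaussianReal 0 1).prod (gaussianReal 0 1)) =
      ∫ p : ℝ × ℝ, (gaussianPDFReal 0 1 p.1 * gaussianPDFReal 0 1 p.2) * h p := by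
  rw [gauss_prod_eq]
  have f_meas : Measurable fun p : ℝ × ℝ =>
      (gaussianPDFReal 0 1 p.1 * gaussianPDFReal 0 1 p.2).toNNReal :=
    (((measurable_gaussianPDFReal 0 1).comp measurable_fst).mul
      ((measurable_gaussianPDFReal 0 1).comp measurable_snd)).real_toNNReal
  have : (fun p : ℝ × ℝ => ENNReal.ofReal (gaussianPDFReal 0 1 p.1 * gaussianPDFReal 0 1 p.2))
      = fun p : ℝ × ℝ =>
        ((gaussianPDFReal 0 1 p.1 * gaussianPDFReal 0 1 p.2).toNNReal : ℝ≥0∞) := rfl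
  rw [this, integral_withDensity_eq_integral_smul f_meas]
  congr 1; funext p
  rw [NNReal.smul_def, Real.coe_toNNReal _
    (mul_nonneg (gaussianPDFReal_nonneg 0 1 p.1) (gaussianPDFReal_nonneg 0 1 p.2)),
    smul_eq_mul]

open Filter in
lemma radial_integral : ∫ r in Ioi (0:ℝ), r ^ 3 * rexp (-r ^ 2 / 2) = 2 := by
  have hderiv : ∀ r ∈ Ioi (0:ℝ),
      HasDerivAt (fun r : ℝ => -(r ^ 2 + 2) * rexp (-r ^ 2 / 2))
        (r ^ 3 * rexp (-r ^ 2 / 2)) r := by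
    intro r _
    have h1 : HasDerivAt (fun r : ℝ => -r ^ 2 / 2) (-r) r := by
      have := ((hasDerivAt_pow 2 r).neg).div_const 2
      simpa using this.congr_deriv (by ring)
    have h2 : HasDerivAt (fun r : ℝ => rexp (-r ^ 2 / 2)) (rexp (-r ^ 2 / 2) * (-r)) r := h1.exp
    have h3 : HasDerivAt (fun r : ℝ => -(r ^ 2 + 2)) (-(2 * r)) r := by
      exact (((hasDerivAt_pow 2 r).add_const 2).neg).congr_deriv (by norm_num)
    have := h3.mul h2
    refine this.congr_deriv ?_
    ring
  have hint : IntegrableOn (fun r : ℝ => r ^ 3 * rexp (-r ^ 2 / 2)) (Ioi 0) := by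
    have := integrableOn_rpow_mul_exp_neg_mul_sq (b := 1/2) (by norm_num) (s := 3) (by norm_num)
    refine this.congr_fun (fun x hx => ?_) measurableSet_Ioi
    beta_reduce
    rw [show ((3:ℝ)) = ((3:ℕ):ℝ) by norm_num, Real.rpow_natCast]
    ring_nf
  have htend : Tendsto (fun r : ℝ => -(r ^ 2 + 2) * rexp (-r ^ 2 / 2)) atTop (nhds 0) := by
    have key : Tendsto (fun u : ℝ => -(2 * u + 2) * rexp (-u)) atTop (nhds 0) := by
      have t1 : Tendsto (fun u : ℝ => u ^ 1 * rexp (-u)) atTop (nhds 0) :=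
        tendsto_pow_mul_exp_neg_atTop_nhds_zero 1
      have t2 := tendsto_exp_neg_atTop_nhds_zero
      have := ((t1.const_mul (-2)).add (t2.const_mul (-2)))
      simpa using this.congr' (Eventually.of_forall fun u => by ring)
    have hcomp : Tendsto (fun r : ℝ => r ^ 2 / 2) atTop atTop :=
      (tendsto_pow_atTop two_ne_zero).atTop_div_const (by norm_num)
    have := key.comp hcomp
    refine this.congr fun r => ?_
    simp only [Function.comp]
    rw [show -(r ^ 2 / 2) = -r ^ 2 / 2 by ring]
    ring_nf
  have := integral_Ioi_of_hasDerivAt_of_tendsto (Continuous.continuousWithinAt (by fun_prop)) hderiv hint htend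
  rw [this]; norm_num

lemma angular_pointwise {φ : ℝ} (hφ1 : -(π/2) ≤ φ) (hφ2 : φ ≤ π/2) {θ : ℝ}
    (hθ : θ ∈ Ioo (-π) π) :
    max (cos θ) 0 * max (sin (θ + φ)) 0
      = (Ioc (-φ) (π/2)).indicator (fun θ => cos θ * sin (θ + φ)) θ := by
  by_cases hmem : θ ∈ Ioc (-φ) (π/2)
  · rw [indicator_of_mem hmem]
    have hc : 0 ≤ cos θ :=
      Real.cos_nonneg_of_mem_Icc ⟨by linarith [hmem.1], hmem.2⟩
    have hs' : 0 ≤ sin (θ + φ) :=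
      Real.sin_nonneg_of_nonneg_of_le_pi (by linarith [hmem.1]) (by linarith [hmem.2])
    rw [max_eq_left hc, max_eq_left hs']
  · rw [indicator_of_notMem hmem]
    rw [mem_Ioc, not_and_or, not_lt, not_le] at hmem
    rcases hmem with hθ1 | hθ1
    · by_cases hc : cos θ ≤ 0
      · rw [max_eq_right hc, zero_mul]
      · push_neg at hc
        have hθ2 : -(π/2) < θ := by
          by_contra h
          push_neg at h
          refine absurd ?_ (not_le.mpr hc)
          rw [← Real.cos_neg]
          exact Real.cos_nonpos_of_pi_div_two_le_of_le (by linarith) (by linarith [hθ.1])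
        have hsle : sin (θ + φ) ≤ 0 :=
          Real.sin_nonpos_of_nonpos_of_neg_pi_le (by linarith) (by linarith)
        rw [max_eq_right hsle, mul_zero]
    · have hc : cos θ ≤ 0 :=
        Real.cos_nonpos_of_pi_div_two_le_of_le hθ1.le (by linarith [hθ.2, Real.pi_pos])
      rw [max_eq_right hc, zero_mul]

lemma angular_integral {ρ : ℝ} (hρ1 : -1 ≤ ρ) (hρ2 : ρ ≤ 1) :
    ∫ θ in Ioo (-π) π, max (cos θ) 0 * max (ρ * cos θ + Real.sqrt (1 - ρ ^ 2) * sin θ) 0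
      = π * ρ / 4 + Real.arcsin ρ * ρ / 2 + Real.sqrt (1 - ρ ^ 2) / 2 := by
  set φ := Real.arcsin ρ with hφ
  have hsin : sin φ = ρ := Real.sin_arcsin hρ1 hρ2
  have hcos : cos φ = Real.sqrt (1 - ρ ^ 2) := Real.cos_arcsin ρ
  have hφ1 : -(π/2) ≤ φ := Real.neg_pi_div_two_le_arcsin ρ
  have hφ2 : φ ≤ π/2 := Real.arcsin_le_pi_div_two ρ
  have harg : ∀ θ : ℝ, ρ * cos θ + Real.sqrt (1 - ρ ^ 2) * sin θ = sin (θ + φ) := by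
    intro θ
    rw [Real.sin_add, hsin, hcos]; ring
  simp only [harg]
  rw [setIntegral_congr_fun measurableSet_Ioo
    (fun θ hθ => angular_pointwise hφ1 hφ2 hθ),
    setIntegral_indicator measurableSet_Ioc,
    inter_eq_self_of_subset_right (fun x hx => mem_Ioo.mpr
      ⟨by linarith [(mem_Ioc.mp hx).1, Real.pi_pos], by linarith [(mem_Ioc.mp hx).2, Real.pi_pos]⟩),
    ← intervalIntegral.integral_of_le (by linarith)]
  have hderiv : ∀ θ ∈ uIcc (-φ) (π/2),
      HasDerivAt (fun θ : ℝ => θ * sin φ / 2 - cos (2 * θ + φ) / 4)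
        (cos θ * sin (θ + φ)) θ := by
    intro θ _
    have hA : HasDerivAt (fun θ : ℝ => θ * sin φ / 2) (sin φ / 2) θ := by
      simpa using ((hasDerivAt_id θ).mul_const (sin φ)).div_const 2
    have hB : HasDerivAt (fun θ : ℝ => 2 * θ + φ) 2 θ := by
      simpa using ((hasDerivAt_id θ).const_mul 2).add_const φ
    have hC := hB.cos
    have := hA.sub (hC.div_const 4)
    refine this.congr_deriv ?_
    have h1 : 2 * θ + φ = θ + (θ + φ) := by ring
    rw [h1, Real.sin_add θ (θ + φ), Real.sin_add θ φ, Real.cos_add θ φ]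
    nlinarith [Real.sin_sq_add_cos_sq θ]
  rw [intervalIntegral.integral_eq_sub_of_hasDerivAt hderiv
    (Continuous.intervalIntegrable (by fun_prop) _ _)]
  have h2 : 2 * (π/2) + φ = π + φ := by ring
  have h3 : 2 * (-φ) + φ = -φ := by ring
  rw [h2, h3, Real.cos_neg, Real.cos_add]
  simp [hsin, hcos]
  ring

/-- The ReLU dual function (arccosine kernel of order 1). -/
noncomputable def reluDual (z : ℝ) : ℝ :=
  (1 / Real.pi) * (z * Real.arcsin z + Real.sqrt (1 - z ^ 2)) + z / 2

theorem relu_bivariate_gaussian_kernel (va vb : ℝ) (hva : 0 ≤ va) (hvb : 0 ≤ vb)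
    (ρ : ℝ) (hρ : ρ ∈ Set.Icc (-1:ℝ) 1) :
    ∫ z : ℝ × ℝ, max (Real.sqrt va * z.1) 0 *
        max (Real.sqrt vb * (ρ * z.1 + Real.sqrt (1 - ρ ^ 2) * z.2)) 0
      ∂((gaussianReal 0 1).prod (gaussianReal 0 1)) =
      Real.sqrt (va * vb) / 2 * reluDual ρ := by
  obtain ⟨hρ1, hρ2⟩ := hρ
  have hstep1 : ∀ x y : ℝ, max (Real.sqrt va * x) 0 *
      max (Real.sqrt vb * (ρ * x + Real.sqrt (1 - ρ ^ 2) * y)) 0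
      = Real.sqrt (va * vb) * (max x 0 * max (ρ * x + Real.sqrt (1 - ρ ^ 2) * y) 0) := by
    intro x y
    have h1 := mul_max_of_nonneg x 0 (Real.sqrt_nonneg va)
    have h2 := mul_max_of_nonneg (ρ * x + Real.sqrt (1 - ρ ^ 2) * y) 0 (Real.sqrt_nonneg vb)
    rw [mul_zero] at h1 h2
    rw [Real.sqrt_mul hva, ← h1, ← h2]
    ring
  simp only [hstep1]
  rw [MeasureTheory.integral_const_mul]
  have hJ : ∫ z : ℝ × ℝ, max z.1 0 * max (ρ * z.1 + Real.sqrt (1 - ρ ^ 2) * z.2) 0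
      ∂((gaussianReal 0 1).prod (gaussianReal 0 1)) = reluDual ρ / 2 := by
    rw [gauss_prod_integral]
    rw [← integral_comp_polarCoord_symm]
    have hg : ∀ x : ℝ, gaussianPDFReal 0 1 x = (Real.sqrt (2 * π))⁻¹ * rexp (-x ^ 2 / 2) := by
      intro x
      simp [gaussianPDFReal]
    have key : ∀ r θ : ℝ, 0 < r →
        r * (gaussianPDFReal 0 1 (r * cos θ) * gaussianPDFReal 0 1 (r * sin θ) *
          (max (r * cos θ) 0 * max (ρ * (r * cos θ) + Real.sqrt (1 - ρ ^ 2) * (r * sin θ)) 0))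
        = ((2 * π)⁻¹ * (r ^ 3 * rexp (-r ^ 2 / 2))) *
          (max (cos θ) 0 * max (ρ * cos θ + Real.sqrt (1 - ρ ^ 2) * sin θ) 0) := by
      intro r θ hr
      rw [hg, hg]
      have m1 := mul_max_of_nonneg (cos θ) 0 hr.le
      have m2 := mul_max_of_nonneg (ρ * cos θ + Real.sqrt (1 - ρ ^ 2) * sin θ) 0 hr.le
      rw [mul_zero] at m1 m2
      rw [show ρ * (r * cos θ) + Real.sqrt (1 - ρ ^ 2) * (r * sin θ)
          = r * (ρ * cos θ + Real.sqrt (1 - ρ ^ 2) * sin θ) by ring,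
        ← m2, ← m1]
      have e3 : rexp (-(r * cos θ) ^ 2 / 2) * rexp (-(r * sin θ) ^ 2 / 2)
          = rexp (-r ^ 2 / 2) := by
        rw [← Real.exp_add]
        congr 1
        nlinarith [Real.sin_sq_add_cos_sq θ]
      have e4 : (Real.sqrt (2 * π))⁻¹ * (Real.sqrt (2 * π))⁻¹ = (2 * π)⁻¹ := by
        rw [← mul_inv, Real.mul_self_sqrt (by positivity)]
      rw [← e4, ← e3]
      ring
    rw [polarCoord_target,
      setIntegral_congr_fun (measurableSet_Ioi.prod measurableSet_Ioo)
        (fun p hp => by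
          simp only [polarCoord_symm_apply, smul_eq_mul]
          exact key p.1 p.2 hp.1),
      Measure.volume_eq_prod, ← Measure.prod_restrict,
      integral_prod_mul (f := fun r : ℝ => (2 * π)⁻¹ * (r ^ 3 * rexp (-r ^ 2 / 2)))
        (g := fun θ : ℝ => max (cos θ) 0 * max (ρ * cos θ + Real.sqrt (1 - ρ ^ 2) * sin θ) 0),
      MeasureTheory.integral_const_mul, radial_integral, angular_integral hρ1 hρ2]
    rw [reluDual]
    have hπ : (π : ℝ) ≠ 0 := Real.pi_ne_zero
    field_simp
    ring
  rw [hJ]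
  ring
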